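/- arXiv:2411.01005 — 2 statements merged into one kernel-verified Lean document; each statement's English description precedes it below -/
import Mathlib

section
/- Every finite topological space is homotopy equivalent to a minimal finite space (its 'core'), obtained by repeatedly removing beat points and passing to a T0 quotient. -/
universe u

/-- The minimal open set containing `x`: the intersection of all open sets containing `x`. -/
def minOpen {X : Type*} [TopologicalSpace X] (x : X) : Set X :=
  ⋂₀ {U : Set X | IsOpen U ∧ x ∈ U}

/-- The specialization order: `x ≤ y` iff `U_x ⊆ U_y`. -/
def sle {X : Type*} [TopologicalSpace X] (x y : X) : Prop := minOpen x ⊆ minOpen y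

/-- Strict specialization order. -/
def slt {X : Type*} [TopologicalSpace X] (x y : X) : Prop := sle x y ∧ x ≠ y

/-- A point `x` is up-beat if there is `y > x` such that every `z > x` satisfies `z ≥ y`. -/
def UpBeat {X : Type*} [TopologicalSpace X] (x : X) : Prop :=
  ∃ y : X, slt x y ∧ ∀ z : X, slt x z → sle y z

/-- A point `x` is down-beat if there is `y < x` such that every `z < x` satisfies `z ≤ y`. -/
def DownBeat {X : Type*} [TopologicalSpace X] (x : X) : Prop :=
  ∃ y : X, slt y x ∧ ∀ z : X, slt z x → sle z y

/-- A minimal finite space: a finite T0 space with no up-beat and no down-beat points. -/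
def IsMinimalFiniteSpace (X : Type*) [TopologicalSpace X] : Prop :=
  Finite X ∧ T0Space X ∧ ∀ x : X, ¬ UpBeat x ∧ ¬ DownBeat x

section Helpers

variable {X : Type*} [TopologicalSpace X]

lemma mem_minOpen_self (x : X) : x ∈ minOpen x :=
  Set.mem_sInter.2 fun _ hU => hU.2

lemma minOpen_subset {U : Set X} {x : X} (hU : IsOpen U) (hx : x ∈ U) : minOpen x ⊆ U :=
  Set.sInter_subset_of_mem ⟨hU, hx⟩

lemma isOpen_minOpen [Finite X] (x : X) : IsOpen (minOpen x) :=
  Set.Finite.isOpen_sInter (Set.toFinite _) fun _ hU => hU.1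

lemma sle_of_mem_minOpen [Finite X] {x y : X} (h : x ∈ minOpen y) : sle x y :=
  minOpen_subset (isOpen_minOpen y) h

lemma mem_minOpen_of_sle {x y : X} (h : sle x y) : x ∈ minOpen y :=
  h (mem_minOpen_self x)

lemma sle_specializes {x y : X} (h : sle x y) : x ⤳ y :=
  specializes_iff_forall_open.2 fun U hU hyU => minOpen_subset hU hyU (mem_minOpen_of_sle h)

lemma isOpen_iff_minOpen [Finite X] {U : Set X} :
    IsOpen U ↔ ∀ z ∈ U, minOpen z ⊆ U := by
  constructor
  · intro h z hz
    exact minOpen_subset h hz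
  · intro h
    have : U = ⋃ z ∈ U, minOpen z := by
      apply Set.Subset.antisymm
      · intro z hz
        exact Set.mem_biUnion hz (mem_minOpen_self z)
      · intro w hw
        simp only [Set.mem_iUnion] at hw
        obtain ⟨z, hz, hw⟩ := hw
        exact h z hz hw
    rw [this]
    exact isOpen_biUnion fun z _ => isOpen_minOpen z

/-- The key homotopy lemma: if `f x ⤳ g x` for all `x`, then `f` and `g` are homotopic. -/
lemma homotopic_of_specializes {Y : Type*} [TopologicalSpace Y] (f g : C(X, Y))
    (h : ∀ x, f x ⤳ g x) : f.Homotopic g := by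
  refine ⟨⟨⟨fun p => if p.1 = 1 then g p.2 else f p.2, ?_⟩, ?_, ?_⟩⟩
  · rw [continuous_def]
    intro U hU
    have key : (fun p : unitInterval × X => if p.1 = 1 then g p.2 else f p.2) ⁻¹' U =
        (({1}ᶜ : Set unitInterval) ×ˢ (f ⁻¹' U)) ∪
          ((Set.univ : Set unitInterval) ×ˢ (f ⁻¹' U ∩ g ⁻¹' U)) := by
      have hfg : ∀ x : X, g x ∈ U → f x ∈ U := fun x hx => (h x).mem_open hU hx
      ext ⟨t, x⟩
      by_cases ht : t = 1 <;>
        simp only [Set.mem_preimage, Set.mem_union, Set.mem_prod, Set.mem_compl_iff,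
          Set.mem_singleton_iff, Set.mem_univ, Set.mem_inter_iff, ht, if_pos, if_neg,
          if_true, if_false, not_true, not_false_iff, true_and, false_and] <;> tauto
    rw [key]
    exact ((isClosed_singleton.isOpen_compl).prod (hU.preimage f.continuous)).union
      (isOpen_univ.prod ((hU.preimage f.continuous).inter (hU.preimage g.continuous)))
  · intro x
    have h01 : (0 : unitInterval) ≠ 1 := fun hc => zero_ne_one (congrArg Subtype.val hc)
    simp [h01]
  · intro x
    simp

end Helpers

section Beat

variable {X : Type u} [TopologicalSpace X] [Finite X]

/-- Removing a beat point gives a homotopy equivalent subspace. -/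
lemma homotopyEquiv_compl_of_beat {x : X} (hbeat : UpBeat x ∨ DownBeat x) :
    Nonempty (ContinuousMap.HomotopyEquiv X (({x}ᶜ : Set X))) := by
  classical
  -- extract the witness y with the comparability we need
  obtain ⟨y, hyx, hcont', hspec⟩ :
      ∃ y : X, y ≠ x ∧ Continuous (fun z => if z = x then y else z) ∧
        ((∀ z : X, z ⤳ (if z = x then y else z)) ∨
         (∀ z : X, (if z = x then y else z) ⤳ z)) := by
    rcases hbeat with ⟨y, hy, hmax⟩ | ⟨y, hy, hmax⟩
    · -- up-beat: slt x y
      refine ⟨y, hy.2.symm, ?_, Or.inl ?_⟩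
      · rw [continuous_def]
        intro U hU
        have hpre : (fun z => if z = x then y else z) ⁻¹' U =
            if y ∈ U then U ∪ {x} else U \ {x} := by
          ext z
          by_cases hz : z = x <;> by_cases hyU : y ∈ U <;>
            simp [hz, hyU]
        rw [hpre]
        by_cases hyU : y ∈ U
        · rw [if_pos hyU]
          have hxU : x ∈ U := minOpen_subset hU hyU (mem_minOpen_of_sle hy.1)
          have : U ∪ {x} = U := Set.union_eq_left.2 (by simpa using hxU)
          rw [this]; exact hU
        · rw [if_neg hyU]
          rw [isOpen_iff_minOpen]
          rintro z ⟨hzU, hzx⟩ w hw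
          refine ⟨minOpen_subset hU hzU hw, ?_⟩
          rintro rfl
          have hslt : slt w z := ⟨sle_of_mem_minOpen hw, fun hc => hzx hc.symm⟩
          exact hyU (minOpen_subset hU hzU (mem_minOpen_of_sle (hmax z hslt)))
      · intro z
        by_cases hz : z = x
        · subst hz
          simp only [if_pos rfl]
          exact sle_specializes hy.1
        · simp only [if_neg hz]
          exact specializes_rfl
    · -- down-beat: slt y x
      refine ⟨y, hy.2, ?_, Or.inr ?_⟩
      · rw [continuous_def]
        intro U hU
        have hpre : (fun z => if z = x then y else z) ⁻¹' U =
            if y ∈ U then U ∪ {x} else U \ {x} := by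
          ext z
          by_cases hz : z = x <;> by_cases hyU : y ∈ U <;>
            simp [hz, hyU]
        rw [hpre]
        by_cases hyU : y ∈ U
        · rw [if_pos hyU]
          rw [isOpen_iff_minOpen]
          rintro z (hzU | hzx) w hw
          · exact Or.inl (minOpen_subset hU hzU hw)
          · rcases eq_or_ne w x with rfl | hwx
            · exact Or.inr rfl
            · have hwz : z = x := hzx
              subst hwz
              have hslt : slt w z := ⟨sle_of_mem_minOpen hw, hwx⟩
              exact Or.inl (minOpen_subset hU hyU (mem_minOpen_of_sle (hmax w hslt)))
        · rw [if_neg hyU]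
          have hxU : x ∉ U := fun hc =>
            hyU (minOpen_subset hU hc (mem_minOpen_of_sle hy.1))
          rw [Set.diff_singleton_eq_self hxU]
          exact hU
      · intro z
        by_cases hz : z = x
        · subst hz
          simp only [if_pos rfl]
          exact sle_specializes hy.1
        · simp only [if_neg hz]
          exact specializes_rfl
  -- build the homotopy equivalence
  set r' : X → X := fun z => if z = x then y else z with hr'
  have hmem : ∀ z, r' z ∈ ({x}ᶜ : Set X) := by
    intro z
    simp only [hr', Set.mem_compl_iff, Set.mem_singleton_iff]
    split <;> simp_all
  let r : C(X, ({x}ᶜ : Set X)) := ⟨fun z => ⟨r' z, hmem z⟩, hcont'.subtype_mk _⟩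
  let i : C(({x}ᶜ : Set X), X) := ⟨Subtype.val, continuous_subtype_val⟩
  have hri : r.comp i = ContinuousMap.id _ := by
    ext ⟨z, hz⟩
    simp only [Set.mem_compl_iff, Set.mem_singleton_iff] at hz
    simp [r, i, hr', hz]
  refine ⟨⟨r, i, ?_, ?_⟩⟩
  · -- (i.comp r).Homotopic id
    rcases hspec with hs | hs
    · exact (homotopic_of_specializes (ContinuousMap.id X) (i.comp r) hs).symm
    · exact homotopic_of_specializes (i.comp r) (ContinuousMap.id X) hs
  · rw [hri]

end Beat

section Quot

variable {X : Type u} [TopologicalSpace X]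

lemma homotopyEquiv_separationQuotient :
    Nonempty (ContinuousMap.HomotopyEquiv X (SeparationQuotient X)) := by
  classical
  let s : SeparationQuotient X → X := Function.surjInv SeparationQuotient.surjective_mk
  have hs : ∀ q, SeparationQuotient.mk (s q) = q :=
    Function.surjInv_eq SeparationQuotient.surjective_mk
  have hcont : Continuous s := by
    rw [continuous_def]
    intro U hU
    have : s ⁻¹' U = SeparationQuotient.mk '' U := by
      ext q
      constructor
      · intro hq
        exact ⟨s q, hq, hs q⟩
      · rintro ⟨z, hz, rfl⟩
        have hins : Inseparable (s (SeparationQuotient.mk z)) z :=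
          SeparationQuotient.mk_eq_mk.1 (hs _)
        exact (hins.mem_open_iff hU).2 hz
    rw [this]
    exact SeparationQuotient.isOpenMap_mk U hU
  refine ⟨⟨⟨SeparationQuotient.mk, SeparationQuotient.continuous_mk⟩, ⟨s, hcont⟩, ?_, ?_⟩⟩
  · -- (s ∘ mk).Homotopic id
    apply homotopic_of_specializes
    intro z
    exact (SeparationQuotient.mk_eq_mk.1 (hs (SeparationQuotient.mk z))).specializes
  · have : (ContinuousMap.mk SeparationQuotient.mk
        SeparationQuotient.continuous_mk).comp ⟨s, hcont⟩ =
        ContinuousMap.id (SeparationQuotient X) := by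
      ext q
      exact hs q
    rw [this]

end Quot

lemma exists_core_aux (n : ℕ) :
    ∀ (X : Type u) (tX : TopologicalSpace X), Finite X → Nat.card X = n →
      ∃ (Y : Type u) (t : TopologicalSpace Y),
        @IsMinimalFiniteSpace Y t ∧ Nonempty (@ContinuousMap.HomotopyEquiv X Y tX t) := by
  induction n using Nat.strong_induction_on with
  | _ n IH =>
    intro X tX hF hcard
    by_cases hT0 : T0Space X
    · by_cases hbeat : ∃ x : X, UpBeat x ∨ DownBeat x
      · obtain ⟨x, hx⟩ := hbeat
        obtain ⟨e⟩ := homotopyEquiv_compl_of_beat hx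
        have hlt : Nat.card ({x}ᶜ : Set X) < n := by
          rw [Nat.card_coe_set_eq]
          calc ({x}ᶜ : Set X).ncard < (Set.univ : Set X).ncard := by
                apply Set.ncard_lt_ncard
                · refine ⟨Set.subset_univ _, fun hc => ?_⟩
                  have := hc (Set.mem_univ x)
                  simp at this
                · exact Set.finite_univ
            _ = n := by rw [Set.ncard_univ, hcard]
        obtain ⟨Y, tY, hmin, ⟨e'⟩⟩ :=
          IH _ hlt (({x}ᶜ : Set X)) inferInstance inferInstance rfl
        exact ⟨Y, tY, hmin, ⟨e.trans e'⟩⟩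
      · push_neg at hbeat
        exact ⟨X, tX, ⟨hF, hT0, fun x => hbeat x⟩,
          ⟨ContinuousMap.HomotopyEquiv.refl X⟩⟩
    · obtain ⟨e⟩ := homotopyEquiv_separationQuotient (X := X)
      rw [t0Space_iff_inseparable] at hT0
      push_neg at hT0
      obtain ⟨a, b, hins, hne⟩ := hT0
      have hFq : Finite (SeparationQuotient X) :=
        Finite.of_surjective _ SeparationQuotient.surjective_mk
      have hle : Nat.card (SeparationQuotient X) ≤ Nat.card X :=
        Nat.card_le_card_of_surjective _ SeparationQuotient.surjective_mk
      have hlt : Nat.card (SeparationQuotient X) < n := by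
        rw [← hcard]
        refine lt_of_le_of_ne hle fun heq => ?_
        have hbij : Function.Bijective (SeparationQuotient.mk : X → SeparationQuotient X) :=
          (Nat.bijective_iff_surjective_and_card _).2
            ⟨SeparationQuotient.surjective_mk, heq.symm⟩
        exact hne (hbij.1 (SeparationQuotient.mk_eq_mk.2 hins))
      obtain ⟨Y, tY, hmin, ⟨e'⟩⟩ :=
        IH _ hlt (SeparationQuotient X) inferInstance hFq rfl
      exact ⟨Y, tY, hmin, ⟨e.trans e'⟩⟩

/-- Every finite topological space is homotopy equivalent to a minimal finite space
(its core). -/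
theorem exists_core (X : Type u) [TopologicalSpace X] [Finite X] :
    ∃ (Y : Type u) (t : TopologicalSpace Y),
      @IsMinimalFiniteSpace Y t ∧ Nonempty (@ContinuousMap.HomotopyEquiv X Y _ t) := by
  exact exists_core_aux (Nat.card X) X inferInstance inferInstance rfl
end

section
/- Any two minimal finite spaces that are homotopy equivalent are homeomorphic; consequently, the core of a finite space is unique up to homeomorphism. -/
open Topology

section SpecializationOrder

variable {X : Type*} [TopologicalSpace X]

lemma minOpen_eq_nhdsKer (x : X) : minOpen x = nhdsKer {x} := by
  simp [minOpen, nhdsKer_def]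

lemma sle_iff_specializes {x y : X} : sle x y ↔ x ⤳ y := by
  rw [sle, minOpen_eq_nhdsKer, minOpen_eq_nhdsKer, specializes_iff_nhdsKer_subset]

lemma slt_iff_specializes {x y : X} : slt x y ↔ x ⤳ y ∧ x ≠ y := by
  rw [slt, sle_iff_specializes]

lemma eventually_specializes_nhds [AlexandrovDiscrete X] (y : X) : ∀ᶠ z in 𝓝 y, z ⤳ y := by
  rw [← principal_nhdsKer_singleton, Filter.eventually_principal]
  exact fun _ => mem_nhdsKer_singleton.1

end SpecializationOrder

section MinimalFiniteSpace

variable {X : Type*} [TopologicalSpace X]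

lemma IsMinimalFiniteSpace.eq_self_of_specializes_self (hX : IsMinimalFiniteSpace X) {f : X → X}
    (hf : Continuous f) (hle : ∀ x, f x ⤳ x) (x : X) : f x = x := by
  obtain ⟨_, _, hbeat⟩ := hX
  by_contra hx
  obtain ⟨a, ha, hmin⟩ :=
    (Set.toFinite {x | f x ≠ x}).exists_minimalFor (fun x => nhdsKer {x}) _ ⟨x, hx⟩
  refine (hbeat a).2 ⟨f a, slt_iff_specializes.2 ⟨hle a, ha⟩, fun z hz => ?_⟩
  rw [slt_iff_specializes] at hz
  have hfz : f z = z := by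
    by_contra hz'
    have haz : a ⤳ z := specializes_iff_nhdsKer_subset.2 <|
      hmin hz' (specializes_iff_nhdsKer_subset.1 hz.1)
    exact hz.2 (hz.1.antisymm haz).eq
  simpa [sle_iff_specializes, hfz] using hz.1.map hf

lemma IsMinimalFiniteSpace.eq_self_of_self_specializes (hX : IsMinimalFiniteSpace X) {f : X → X}
    (hf : Continuous f) (hge : ∀ x, x ⤳ f x) (x : X) : f x = x := by
  obtain ⟨_, _, hbeat⟩ := hX
  by_contra hx
  obtain ⟨a, ha, hmax⟩ :=
    (Set.toFinite {x | f x ≠ x}).exists_maximalFor (fun x => nhdsKer {x}) _ ⟨x, hx⟩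
  refine (hbeat a).1 ⟨f a, slt_iff_specializes.2 ⟨hge a, Ne.symm ha⟩, fun z hz => ?_⟩
  rw [slt_iff_specializes] at hz
  have hfz : f z = z := by
    by_contra hz'
    have hza : z ⤳ a := specializes_iff_nhdsKer_subset.2 <|
      hmax hz' (specializes_iff_nhdsKer_subset.1 hz.1)
    exact hz.2 (hz.1.antisymm hza).eq
  simpa [sle_iff_specializes, hfz] using hz.1.map hf

end MinimalFiniteSpace

lemma eventually_forall_specializes {T X Y : Type*} [TopologicalSpace T] [TopologicalSpace X]
    [TopologicalSpace Y] [Finite X] [AlexandrovDiscrete Y] {F : T × X → Y} (hF : Continuous F)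
    (t : T) : ∀ᶠ s in 𝓝 t, ∀ x, F (s, x) ⤳ F (t, x) :=
  Filter.eventually_all.2 fun x =>
    ((hF.comp (Continuous.prodMk_left x)).tendsto t).eventually (eventually_specializes_nhds _)

lemma ContinuousMap.Homotopic.eq_id_of_isMinimalFiniteSpace {X : Type*} [TopologicalSpace X]
    (hX : IsMinimalFiniteSpace X) {f : C(X, X)} (hf : f.Homotopic (ContinuousMap.id X)) :
    f = ContinuousMap.id X := by
  obtain ⟨H⟩ := hf
  have : Finite X := hX.1
  have hHt (t : unitInterval) : Continuous fun x => H (t, x) := (H.curry t).continuous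
  let IsId (t : unitInterval) : Prop := ∀ x, H (t, x) = x
  have hlc : IsLocallyConstant IsId := by
    refine (IsLocallyConstant.iff_eventually_eq IsId).2 fun t => ?_
    filter_upwards [eventually_forall_specializes H.continuous t] with s hs
    refine propext ⟨fun hs_id => ?_, fun ht_id => ?_⟩
    · exact hX.eq_self_of_self_specializes (hHt t) fun x => by simpa only [hs_id x] using hs x
    · exact hX.eq_self_of_specializes_self (hHt s) fun x => by simpa only [ht_id x] using hs x
  have hid : IsId 0 := hlc.apply_eq_of_preconnectedSpace 1 0 ▸ H.apply_one
  ext x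
  simpa using hid x

/-- Two homotopy equivalent minimal finite spaces are homeomorphic; consequently the
core of a finite space is unique up to homeomorphism. -/
theorem minimal_homotopyEquiv_implies_homeomorphic
    {X Y : Type*} [TopologicalSpace X] [TopologicalSpace Y]
    (hX : IsMinimalFiniteSpace X) (hY : IsMinimalFiniteSpace Y)
    (h : Nonempty (ContinuousMap.HomotopyEquiv X Y)) : Nonempty (X ≃ₜ Y) := by
  obtain ⟨e⟩ := h
  have hgf := e.left_inv.eq_id_of_isMinimalFiniteSpace hX
  have hfg := e.right_inv.eq_id_of_isMinimalFiniteSpace hY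
  exact ⟨{ toFun := e.toFun
           invFun := e.invFun
           left_inv := DFunLike.congr_fun hgf
           right_inv := DFunLike.congr_fun hfg
           continuous_toFun := e.toFun.continuous
           continuous_invFun := e.invFun.continuous }⟩
end
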